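/- The sum of groves of planar binary trees is associative, (A + B) + C = A + (B + C) for all groves A, B, C; the grove {|} is a two-sided neutral element; and if A is a grove of degree n and B is a grove of degree m, then A + B is a grove of degree n + m (in particular A + B is a nonempty subset of Y_{n+m}). Hence the set of all groves is a graded monoid under + and the degree map to ℕ is a monoid morphism. -/

import Mathlib

/-- A planar binary tree: a leaf `|` or a grafting `x ∨ y`. -/
inductive PBT : Type
  | leaf : PBT
  | node : PBT → PBT → PBT
  deriving DecidableEq

namespace PBT

/-- The degree: number of internal vertices. -/
def deg : PBT → ℕ
  | leaf => 0
  | node l r => deg l + deg r + 1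

/-- The set `Y n` of planar binary trees of degree `n`. -/
def Y (n : ℕ) : Set PBT := {t | t.deg = n}

/-- The `over` operation `x / y`. -/
def overT : PBT → PBT → PBT
  | x, leaf => x
  | x, node yl yr => node (overT x yl) yr

/-- The `under` operation `x \ y`. -/
def under : PBT → PBT → PBT
  | leaf, y => y
  | node xl xr, y => node xl (under xr y)

/-- The Tamari order, generated by `(x ∨ y) ∨ z ≤ x ∨ (y ∨ z)` and compatibility
with grafting on both sides. -/
inductive tle : PBT → PBT → Prop
  | refl (x : PBT) : tle x x
  | trans {x y z : PBT} : tle x y → tle y z → tle x z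
  | rotate (x y z : PBT) : tle (node (node x y) z) (node x (node y z))
  | node_left {x y : PBT} (z : PBT) : tle x y → tle (node x z) (node y z)
  | node_right {x y : PBT} (z : PBT) : tle x y → tle (node z x) (node z y)

/-- The sum of two planar binary trees: the Tamari interval `[x/y, x\y]`
(a subset of `Y (deg x + deg y)`). -/
def sum (x y : PBT) : Set PBT := {z | tle (overT x y) z ∧ tle z (under x y)}

/-- A grove of degree `n`: a nonempty subset of `Y n`. -/
def Grove (n : ℕ) (A : Set PBT) : Prop := A.Nonempty ∧ ∀ x ∈ A, x.deg = n

/-- The sum of groves. -/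
def gsum (A B : Set PBT) : Set PBT := ⋃ x ∈ A, ⋃ y ∈ B, sum x y

/-- The reflection involution σ. -/
def σ : PBT → PBT
  | leaf => leaf
  | node l r => node (σ r) (σ l)

/-- The left sum `x ⊣ y` of trees (with the conventions `x ⊣ | = {x}`, `| ⊣ y = {|}`). -/
def lsum : PBT → PBT → Set PBT
  | x, leaf => {x}
  | leaf, _ => {leaf}
  | node xl xr, y => (fun z => node xl z) '' sum xr y

/-- The right sum `x ⊢ y` of trees (with the conventions `| ⊢ y = {y}`, `x ⊢ | = {|}`). -/
def rsum : PBT → PBT → Set PBT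
  | leaf, y => {y}
  | _, leaf => {leaf}
  | x, node yl yr => (fun z => node z yr) '' sum x yl

/-- Left sum of groves. -/
def glsum (A B : Set PBT) : Set PBT := ⋃ x ∈ A, ⋃ y ∈ B, lsum x y

/-- Right sum of groves. -/
def grsum (A B : Set PBT) : Set PBT := ⋃ x ∈ A, ⋃ y ∈ B, rsum x y

/-- Multiplication of a tree by a grove:
`| × B = {|}` and `(xˡ ∨ xʳ) × B = ((xˡ × B) ⊢ B) ⊣ (xʳ × B)`.
(The conventions `{|} ⊢ B = B` and `A ⊣ {|} = A` are built into `rsum`/`lsum`.) -/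
def tmul : PBT → Set PBT → Set PBT
  | leaf, _ => {leaf}
  | node l r, B => glsum (grsum (tmul l B) B) (tmul r B)

/-- Multiplication of groves. -/
def gmul (A B : Set PBT) : Set PBT := ⋃ x ∈ A, tmul x B

end PBT


/-!
Write `x = xˡ ∨ xʳ`, `y = yˡ ∨ yʳ` and `c = cˡ ∨ cʳ`. The heart of the matter is the recursion
`x + y = xˡ ∨ (xʳ + y) ∪ (x + yˡ) ∨ yʳ`. The inclusion `⊇` is monotonicity of grafting. For `⊆`,
walk up from `x / y = (x / yˡ) ∨ yʳ` to any tree of the interval by single rotations, all of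
which stay below `x \ y = xˡ ∨ (xʳ \ y)`: comparing the degrees of left subtrees shows that each
such rotation stays inside the right-hand side.

With the recursion, both `(x + y) + c` and `x + (y + c)` unfold to
`xˡ ∨ ((xʳ + y) + c) ∪ (x + yˡ) ∨ (yʳ + c) ∪ ((x + y) + cˡ) ∨ cʳ`, so associativity follows by
induction. The leaf is neutral because `x + | = | + x = [x, x] = {x}` by antisymmetry, and
`x + y ⊆ Y (deg x + deg y)` because rotations preserve the degree.
-/

namespace PBT

@[simp] lemma leaf_overT : ∀ y, overT leaf y = y
  | leaf => rfl
  | node a b => by rw [overT, leaf_overT a]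

@[simp] lemma under_leaf : ∀ x, under x leaf = x
  | leaf => rfl
  | node a b => by rw [under, under_leaf b]

@[simp] lemma deg_overT (x : PBT) : ∀ y, (overT x y).deg = x.deg + y.deg
  | leaf => rfl
  | node a b => by simp only [overT, deg, deg_overT x a]; omega

@[simp] lemma deg_under : ∀ x y, (under x y).deg = x.deg + y.deg
  | leaf, y => by simp [under, deg]
  | node a b, y => by simp only [under, deg, deg_under b y]; omega

lemma tle.deg_eq {a b : PBT} (h : tle a b) : a.deg = b.deg := by
  induction h with
  | refl => rfl
  | trans _ _ ih₁ ih₂ => exact ih₁.trans ih₂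
  | rotate => simp only [deg]; omega
  | node_left _ _ ih | node_right _ _ ih => simp only [deg, ih]

inductive Step : PBT → PBT → Prop
  | root (a b c : PBT) : Step (node (node a b) c) (node a (node b c))
  | left {a b : PBT} (c : PBT) : Step a b → Step (node a c) (node b c)
  | right {a b : PBT} (c : PBT) : Step a b → Step (node c a) (node c b)

lemma tle_of_step {a b : PBT} (h : Step a b) : tle a b := by
  induction h with
  | root a b c => exact .rotate a b c
  | left c _ ih => exact .node_left c ih
  | right c _ ih => exact .node_right c ih

lemma tle_iff_reflTransGen {a b : PBT} : tle a b ↔ Relation.ReflTransGen Step a b := by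
  constructor
  · intro h
    induction h with
    | refl => exact .refl
    | trans _ _ ih₁ ih₂ => exact ih₁.trans ih₂
    | rotate x y z => exact .single (.root x y z)
    | node_left z _ ih => exact ih.lift (node · z) fun _ _ h => .left z h
    | node_right z _ ih => exact ih.lift (node z ·) fun _ _ h => .right z h
  · intro h
    induction h with
    | refl => exact .refl a
    | tail _ hs ih => exact ih.trans (tle_of_step hs)

def leftDegSum : PBT → ℕ
  | leaf => 0
  | node l r => leftDegSum l + leftDegSum r + deg l

lemma Step.leftDegSum_lt {a b : PBT} (h : Step a b) : b.leftDegSum < a.leftDegSum := by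
  induction h with
  | root => simp only [leftDegSum, deg]; omega
  | left c hs ih => simp only [leftDegSum, (tle_of_step hs).deg_eq]; omega
  | right c _ ih => simp only [leftDegSum]; omega

lemma tle.leftDegSum_le {a b : PBT} (h : tle a b) : b.leftDegSum ≤ a.leftDegSum := by
  replace h := tle_iff_reflTransGen.1 h
  induction h with
  | refl => exact le_rfl
  | tail _ hs ih => exact hs.leftDegSum_lt.le.trans ih

lemma Step.not_tle {a b : PBT} (h : Step a b) : ¬ tle b a :=
  fun h' => (h.leftDegSum_lt.trans_le h'.leftDegSum_le).false

lemma tle_antisymm {a b : PBT} (h₁ : tle a b) (h₂ : tle b a) : a = b := by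
  rcases (tle_iff_reflTransGen.1 h₁).cases_head with h | ⟨c, hac, hcb⟩
  · exact h
  · exact absurd ((tle_iff_reflTransGen.2 hcb).trans h₂) hac.not_tle

def NodeLE (a b c d : PBT) : Prop :=
  (tle a c ∧ tle b d) ∨ ∃ e, tle a (node c e) ∧ tle (node e b) d

lemma NodeLE.trans {a b c d c' d' : PBT} (h₁ : NodeLE a b c d) (h₂ : NodeLE c d c' d') :
    NodeLE a b c' d' := by
  rcases h₁ with ⟨p₁, p₂⟩ | ⟨e, p₁, p₂⟩ <;> rcases h₂ with ⟨q₁, q₂⟩ | ⟨f, q₁, q₂⟩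
  · exact .inl ⟨p₁.trans q₁, p₂.trans q₂⟩
  · exact .inr ⟨f, p₁.trans q₁, (tle.node_right f p₂).trans q₂⟩
  · exact .inr ⟨e, p₁.trans (.node_left e q₁), p₂.trans q₂⟩
  · exact .inr ⟨node f e, p₁.trans ((tle.node_left e q₁).trans (.rotate c' f e)),
      (tle.rotate f e b).trans ((tle.node_right f p₂).trans q₂)⟩

lemma NodeLE.of_tle {u v : PBT} (h : tle u v) :
    ∀ {a b c d}, u = node a b → v = node c d → NodeLE a b c d := by
  induction h with
  | refl => rintro _ _ _ _ ⟨⟩ ⟨⟩; exact .inl ⟨.refl _, .refl _⟩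
  | @trans _ y _ hxy _ ih₁ ih₂ =>
    rintro _ _ _ _ rfl rfl
    cases y with
    | leaf => exact absurd hxy.deg_eq (by simp [deg])
    | node p q => exact (ih₁ rfl rfl).trans (ih₂ rfl rfl)
  | rotate x y z => rintro _ _ _ _ ⟨⟩ ⟨⟩; exact .inr ⟨y, .refl _, .refl _⟩
  | node_left z h => rintro _ _ _ _ ⟨⟩ ⟨⟩; exact .inl ⟨h, .refl z⟩
  | node_right z h => rintro _ _ _ _ ⟨⟩ ⟨⟩; exact .inl ⟨.refl z, h⟩

lemma tle_node_node_iff {a b c d : PBT} : tle (node a b) (node c d) ↔ NodeLE a b c d := by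
  refine ⟨fun h => NodeLE.of_tle h rfl rfl, ?_⟩
  rintro (⟨h₁, h₂⟩ | ⟨e, h₁, h₂⟩)
  · exact (tle.node_left b h₁).trans (.node_right c h₂)
  · exact (tle.node_left b h₁).trans ((tle.rotate c e b).trans (.node_right c h₂))

lemma deg_le_of_tle_node {a b c d : PBT} (h : tle (node a b) (node c d)) : c.deg ≤ a.deg := by
  rcases tle_node_node_iff.1 h with ⟨h₁, -⟩ | ⟨e, h₁, -⟩
  · exact h₁.deg_eq.ge
  · have := h₁.deg_eq; simp only [deg] at this; omega

lemma tle_and_tle_of_tle_node {a b c d : PBT} (h : tle (node a b) (node c d))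
    (hd : a.deg = c.deg) : tle a c ∧ tle b d := by
  rcases tle_node_node_iff.1 h with h' | ⟨e, h₁, -⟩
  · exact h'
  · simp only [h₁.deg_eq, deg] at hd; omega

lemma exists_of_tle_node {a b c d : PBT} (h : tle (node a b) (node c d))
    (hd : c.deg < a.deg) : ∃ e, tle a (node c e) ∧ tle (node e b) d := by
  rcases tle_node_node_iff.1 h with ⟨h₁, -⟩ | h'
  · rw [h₁.deg_eq] at hd; omega
  · exact h'

lemma overT_node_tle (a b : PBT) : ∀ c, tle (overT (node a b) c) (node a (overT b c))
  | leaf => .refl _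
  | node cl cr => (tle.node_left cr (overT_node_tle a b cl)).trans (.rotate a (overT b cl) cr)

lemma node_under_tle (a : PBT) : ∀ b c, tle (node (under a b) c) (under a (node b c)) := by
  induction a with
  | leaf => exact fun b c => .refl _
  | node a₁ a₂ _ ih =>
    exact fun b c => (tle.rotate a₁ (under a₂ b) c).trans (.node_right a₁ (ih b c))

lemma overT_tle_under : ∀ x y, tle (overT x y) (under x y)
  | leaf, y => by rw [leaf_overT]; exact .refl y
  | node xl xr, y => (overT_node_tle xl xr y).trans (.node_right xl (overT_tle_under xr y))

lemma overT_mem_sum (x y : PBT) : overT x y ∈ sum x y :=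
  ⟨.refl _, overT_tle_under x y⟩

lemma deg_of_mem_sum {x y z : PBT} (h : z ∈ sum x y) : z.deg = x.deg + y.deg := by
  rw [← h.1.deg_eq, deg_overT]

lemma sum_leaf_right (x : PBT) : sum x leaf = {x} := by
  ext z
  simp only [sum, overT, under_leaf, Set.mem_ofPred_eq, Set.mem_singleton_iff]
  exact ⟨fun h => tle_antisymm h.2 h.1, by rintro rfl; exact ⟨.refl z, .refl z⟩⟩

lemma sum_leaf_left (y : PBT) : sum leaf y = {y} := by
  ext z
  simp only [sum, leaf_overT, under, Set.mem_ofPred_eq, Set.mem_singleton_iff]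
  exact ⟨fun h => tle_antisymm h.2 h.1, by rintro rfl; exact ⟨.refl z, .refl z⟩⟩

lemma node_left_mem_sum {xl xr y v : PBT} (hv : v ∈ sum xr y) : node xl v ∈ sum (node xl xr) y :=
  ⟨(overT_node_tle xl xr y).trans (.node_right xl hv.1), .node_right xl hv.2⟩

lemma node_right_mem_sum {x yl yr u : PBT} (hu : u ∈ sum x yl) : node u yr ∈ sum x (node yl yr) :=
  ⟨.node_left yr hu.1, (tle.node_left yr hu.2).trans (node_under_tle x yl yr)⟩

lemma deg_le_of_node_tle_under_node {f c yl yr : PBT} (g : PBT)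
    (h : tle (node f c) (under g (node yl yr))) (hc : c.deg < (node yl yr).deg) :
    c.deg ≤ yr.deg := by
  induction g generalizing f with
  | leaf =>
    have := deg_le_of_tle_node h
    have := h.deg_eq
    simp only [under, deg] at *; omega
  | node gl gr _ ih =>
    rcases (deg_le_of_tle_node h).eq_or_lt with hd | hd
    · have := (tle_and_tle_of_tle_node h hd.symm).2.deg_eq
      simp only [deg_under] at this; omega
    · obtain ⟨e, -, he⟩ := exists_of_tle_node h hd
      exact ih he

lemma tle_of_node_tle_under_node {f c yl yr : PBT} (g : PBT)
    (h : tle (node f c) (under g (node yl yr))) (hc : c.deg = yr.deg) :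
    tle c yr ∧ tle f (under g yl) := by
  induction g generalizing f with
  | leaf =>
    have := h.deg_eq
    simp only [under, deg] at this
    exact (tle_and_tle_of_tle_node h (by omega)).symm
  | node gl gr _ ih =>
    have := h.deg_eq
    simp only [under, deg, deg_under] at this
    obtain ⟨e, hf, he⟩ := exists_of_tle_node h (by omega)
    exact ⟨(ih he).1, hf.trans (.node_right gl (ih he).2)⟩

lemma mem_of_tle_of_forall_step {S : Set PBT} {ub a w : PBT}
    (hS : ∀ z z', z ∈ S → Step z z' → tle z' ub → z' ∈ S) (ha : a ∈ S) (h : tle a w)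
    (hw : tle w ub) : w ∈ S := by
  induction tle_iff_reflTransGen.1 h using Relation.ReflTransGen.head_induction_on with
  | refl => exact ha
  | head hs hrest ih =>
    exact ih (hS _ _ ha hs ((tle_iff_reflTransGen.2 hrest).trans hw)) (tle_iff_reflTransGen.2 hrest)

def graftRight (x : PBT) : PBT → Set PBT
  | leaf => ∅
  | node yl yr => (fun u => node u yr) '' sum x yl

lemma exists_of_step_node_left {xl xr y v z : PBT} (hv : v ∈ sum xr y) (hs : Step (node xl v) z)
    (hz : tle z (under (node xl xr) y)) : ∃ v' ∈ sum xr y, node xl v' = z := by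
  cases hs with
  | root a b =>
    have := deg_le_of_tle_node hz
    simp only [deg] at this; omega
  | left _ hs' =>
    exact absurd (tle_and_tle_of_tle_node hz (tle_of_step hs').deg_eq.symm).1 hs'.not_tle
  | right _ hs' =>
    exact ⟨_, ⟨hv.1.trans (tle_of_step hs'), (tle_and_tle_of_tle_node hz rfl).2⟩, rfl⟩

lemma mem_of_step_node_right {xl xr yl yr u z : PBT} (hu : u ∈ sum (node xl xr) yl)
    (hsplit : u ∈ node xl '' sum xr yl ∪ graftRight (node xl xr) yl) (hs : Step (node u yr) z)
    (hz : tle z (under (node xl xr) (node yl yr))) :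
    z ∈ node xl '' sum xr (node yl yr) ∪ graftRight (node xl xr) (node yl yr) := by
  have hdu := deg_of_mem_sum hu
  simp only [deg] at hdu
  cases hs with
  | root a b =>
    rcases hsplit with ⟨v, hv, ⟨⟩⟩ | hR
    · exact .inl ⟨_, node_right_mem_sum hv, rfl⟩
    cases yl with
    | leaf => exact absurd hR (Set.notMem_empty _)
    | node yll ylr =>
      obtain ⟨u', hu', ⟨⟩⟩ := hR
      obtain ⟨e, -, he⟩ := exists_of_tle_node hz (by simp only [deg] at hdu ⊢; omega)
      have := deg_le_of_node_tle_under_node xr he (by simp only [deg]; omega)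
      simp only [deg] at this; omega
  | left _ hs' =>
    obtain ⟨e, hb, he⟩ := exists_of_tle_node hz (by rw [← (tle_of_step hs').deg_eq]; omega)
    have hb' : tle _ (under (node xl xr) yl) :=
      hb.trans (.node_right xl (tle_of_node_tle_under_node xr he rfl).2)
    exact .inr ⟨_, ⟨hu.1.trans (tle_of_step hs'), hb'⟩, rfl⟩
  | right _ hs' =>
    obtain ⟨e, -, he⟩ := exists_of_tle_node hz (by omega)
    exact absurd (tle_of_node_tle_under_node xr he (tle_of_step hs').deg_eq.symm).1 hs'.not_tle

theorem sum_node_left (xl xr : PBT) :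
    ∀ y, sum (node xl xr) y = node xl '' sum xr y ∪ graftRight (node xl xr) y
  | leaf => by simp [sum_leaf_right, graftRight]
  | node yl yr => by
    refine subset_antisymm (fun w hw => mem_of_tle_of_forall_step ?_ ?_ hw.1 hw.2) ?_
    · rintro _ z' (⟨v, hv, rfl⟩ | ⟨u, hu, rfl⟩) hs hz'
      · exact .inl (exists_of_step_node_left hv hs hz')
      · exact mem_of_step_node_right hu (sum_node_left xl xr yl ▸ hu) hs hz'
    · exact .inr ⟨_, overT_mem_sum _ _, rfl⟩
    · rintro _ (⟨v, hv, rfl⟩ | ⟨u, hu, rfl⟩)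
      · exact node_left_mem_sum hv
      · exact node_right_mem_sum hu

lemma sum_node_node (xl xr yl yr : PBT) :
    sum (node xl xr) (node yl yr) =
      node xl '' sum xr (node yl yr) ∪ (fun u => node u yr) '' sum (node xl xr) yl :=
  sum_node_left xl xr (node yl yr)

lemma biUnion_sum_node_sum (xl xr yl yr cl cr : PBT) :
    ⋃ z ∈ sum (node xl xr) (node yl yr), sum z (node cl cr) =
      node xl '' (⋃ z ∈ sum xr (node yl yr), sum z (node cl cr)) ∪
        Set.image2 node (sum (node xl xr) yl) (sum yr (node cl cr)) ∪
        (fun s => node s cr) '' ⋃ z ∈ sum (node xl xr) (node yl yr), sum z cl := by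
  ext w
  simp only [Set.mem_iUnion, Set.mem_union, Set.mem_image, Set.mem_image2, exists_prop]
  constructor
  · rintro ⟨z, hz, hw⟩
    rw [sum_node_node] at hz
    rcases hz with ⟨v, hv, rfl⟩ | ⟨u, hu, rfl⟩ <;> rw [sum_node_node] at hw
    · rcases hw with ⟨v', hv', rfl⟩ | ⟨s, hs, rfl⟩
      · exact .inl (.inl ⟨v', ⟨v, hv, hv'⟩, rfl⟩)
      · exact .inr ⟨s, ⟨_, node_left_mem_sum hv, hs⟩, rfl⟩
    · rcases hw with ⟨t, ht, rfl⟩ | ⟨s, hs, rfl⟩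
      · exact .inl (.inr ⟨u, hu, t, ht, rfl⟩)
      · exact .inr ⟨s, ⟨_, node_right_mem_sum hu, hs⟩, rfl⟩
  · rintro ((⟨v', ⟨v, hv, hv'⟩, rfl⟩ | ⟨u, hu, t, ht, rfl⟩) | ⟨s, ⟨z, hz, hs⟩, rfl⟩)
    · exact ⟨_, node_left_mem_sum hv, node_left_mem_sum hv'⟩
    · exact ⟨_, node_right_mem_sum hu, node_left_mem_sum ht⟩
    · exact ⟨z, hz, node_right_mem_sum hs⟩

lemma biUnion_sum_sum_node (xl xr yl yr cl cr : PBT) :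
    ⋃ t ∈ sum (node yl yr) (node cl cr), sum (node xl xr) t =
      node xl '' (⋃ t ∈ sum (node yl yr) (node cl cr), sum xr t) ∪
        Set.image2 node (sum (node xl xr) yl) (sum yr (node cl cr)) ∪
        (fun s => node s cr) '' ⋃ t ∈ sum (node yl yr) cl, sum (node xl xr) t := by
  ext w
  simp only [Set.mem_iUnion, Set.mem_union, Set.mem_image, Set.mem_image2, exists_prop]
  constructor
  · rintro ⟨t, ht, hw⟩
    rw [sum_node_node] at ht
    rcases ht with ⟨t', ht', rfl⟩ | ⟨s, hs, rfl⟩ <;> rw [sum_node_node] at hw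
    · rcases hw with ⟨v, hv, rfl⟩ | ⟨u, hu, rfl⟩
      · exact .inl (.inl ⟨v, ⟨_, node_left_mem_sum ht', hv⟩, rfl⟩)
      · exact .inl (.inr ⟨u, hu, t', ht', rfl⟩)
    · rcases hw with ⟨v, hv, rfl⟩ | ⟨u, hu, rfl⟩
      · exact .inl (.inl ⟨v, ⟨_, node_right_mem_sum hs, hv⟩, rfl⟩)
      · exact .inr ⟨u, ⟨s, hs, hu⟩, rfl⟩
  · rintro ((⟨v, ⟨t, ht, hv⟩, rfl⟩ | ⟨u, hu, t', ht', rfl⟩) | ⟨u, ⟨s, hs, hu⟩, rfl⟩)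
    · exact ⟨t, ht, node_left_mem_sum hv⟩
    · exact ⟨_, node_left_mem_sum ht', node_right_mem_sum hu⟩
    · exact ⟨_, node_right_mem_sum hs, node_right_mem_sum hu⟩

theorem sum_assoc : ∀ x y c : PBT, ⋃ z ∈ sum x y, sum z c = ⋃ t ∈ sum y c, sum x t
  | leaf, y, c => by simp [sum_leaf_left]
  | x, leaf, c => by simp [sum_leaf_left, sum_leaf_right]
  | x, y, leaf => by simp [sum_leaf_right]
  | node xl xr, node yl yr, node cl cr => by
    rw [biUnion_sum_node_sum, biUnion_sum_sum_node, sum_assoc xr, sum_assoc (node xl xr) _ cl]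
termination_by x _ c => (c, x)

lemma gsum_assoc (A B C : Set PBT) : gsum (gsum A B) C = gsum A (gsum B C) := by
  ext w
  have key := fun x y c => Set.ext_iff.1 (sum_assoc x y c) w
  simp only [gsum, Set.mem_iUnion, exists_prop] at key ⊢
  constructor
  · rintro ⟨z, ⟨x, hx, y, hy, hz⟩, c, hc, hw⟩
    obtain ⟨t, ht, hw⟩ := (key x y c).1 ⟨z, hz, hw⟩
    exact ⟨x, hx, t, ⟨y, hy, c, hc, ht⟩, hw⟩
  · rintro ⟨x, hx, t, ⟨y, hy, c, hc, ht⟩, hw⟩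
    obtain ⟨z, hz, hw⟩ := (key x y c).2 ⟨t, ht, hw⟩
    exact ⟨z, ⟨x, hx, y, hy, hz⟩, c, hc, hw⟩

lemma gsum_leaf_left (A : Set PBT) : gsum {leaf} A = A := by
  simp [gsum, sum_leaf_left]

lemma gsum_leaf_right (A : Set PBT) : gsum A {leaf} = A := by
  simp [gsum, sum_leaf_right]

lemma Grove.gsum {n m : ℕ} {A B : Set PBT} (hA : Grove n A) (hB : Grove m B) :
    Grove (n + m) (gsum A B) := by
  obtain ⟨⟨x, hx⟩, hA⟩ := hA
  obtain ⟨⟨y, hy⟩, hB⟩ := hB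
  refine ⟨⟨overT x y, Set.mem_biUnion hx (Set.mem_biUnion hy (overT_mem_sum x y))⟩, ?_⟩
  simp only [PBT.gsum, Set.mem_iUnion, exists_prop]
  rintro z ⟨a, ha, b, hb, hz⟩
  rw [deg_of_mem_sum hz, hA a ha, hB b hb]

end PBT

open PBT in
/-- the sum of groves is associative, `{|}` is a two-sided neutral
element, and the sum of a grove of degree `n` and a grove of degree `m` is a
grove of degree `n + m` (so groves form a graded monoid and `deg` is a monoid
morphism to `ℕ`). -/
theorem grove_sum_monoid :
    (∀ A B C : Set PBT, gsum (gsum A B) C = gsum A (gsum B C)) ∧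
    (∀ n : ℕ, ∀ A : Set PBT, Grove n A → gsum {PBT.leaf} A = A ∧ gsum A {PBT.leaf} = A) ∧
    (∀ n m : ℕ, ∀ A B : Set PBT, Grove n A → Grove m B → Grove (n + m) (gsum A B)) := by
  exact ⟨gsum_assoc, fun _ A _ => ⟨gsum_leaf_left A, gsum_leaf_right A⟩,
    fun _ _ _ _ hA hB => hA.gsum hB⟩
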